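/- If additionally A(0) commutes with C, then A(t) commutes with C for all t ≥ 0, d/dt ℓ(A(t))² = −8ℓ(A(t))², and hence ℓ(A(t)) = ℓ(A(0))·exp(−4t); so the first time ℓ(A(t)) ≤ ε equals exactly (1/4)·log(ℓ(A(0))/ε) for 0 < ε < ℓ(A(0)). -/

import Mathlib

open Matrix Set Real
open scoped Matrix.Norms.Frobenius

/-! The commutator `D = AC − CA` satisfies the linear equation `D' = −A⁻¹(DC + CD)A⁻¹ − 2D`,
so Grönwall's inequality keeps it at `0`. Once `A` commutes with `C`, the residual `E = C − A²`
satisfies `E' = −(A'A + AA') = −4E`, hence `‖E‖²` decays exactly like `e^{−8t}`; the hitting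
time is obtained by solving `ℓ(A 0) e^{−4t} = ε`. -/

theorem eq_zero_of_norm_deriv_le_mul_norm {E : Type*} [NormedAddCommGroup E] [NormedSpace ℝ E]
    {f f' : ℝ → E} {k : ℝ → ℝ} (hk : Continuous k) (hf : ∀ t, HasDerivAt f (f' t) t)
    (hbound : ∀ t, ‖f' t‖ ≤ k t * ‖f t‖) (h0 : f 0 = 0) {t : ℝ} (ht : 0 ≤ t) : f t = 0 := by
  obtain ⟨K, hK⟩ := (isCompact_Icc (a := 0) (b := t)).exists_bound_of_continuousOn hk.continuousOn
  refine eq_zero_of_abs_deriv_le_mul_abs_self_of_eq_zero_right (K := K)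
    (fun x _ => (hf x).continuousAt.continuousWithinAt) (fun x _ => (hf x).hasDerivWithinAt) h0
    (fun x hx => (hbound x).trans ?_) t ⟨ht, le_rfl⟩
  have hkK : k x ≤ K := (le_abs_self _).trans (hK x (Ico_subset_Icc_self hx))
  exact mul_le_mul_of_nonneg_right hkK (norm_nonneg _)

theorem eq_mul_exp_of_hasDerivAt_mul {g : ℝ → ℝ} {c : ℝ}
    (hg : ∀ t, 0 ≤ t → HasDerivAt g (c * g t) t) {t : ℝ} (ht : 0 ≤ t) :
    g t = g 0 * exp (c * t) := by
  have hderiv : ∀ s, 0 ≤ s → HasDerivAt (fun u => g u * exp (-(c * u))) 0 s := by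
    intro s hs
    refine ((hg s hs).fun_mul (((hasDerivAt_id' s).const_mul c).fun_neg.exp)).congr_deriv ?_
    ring
  have hconst := constant_of_has_deriv_right_zero
    (fun x hx => (hderiv x hx.1).continuousAt.continuousWithinAt)
    (fun x hx => (hderiv x hx.1).hasDerivWithinAt) t ⟨ht, le_rfl⟩
  simp only [mul_zero, neg_zero, exp_zero, mul_one] at hconst
  rw [← hconst, mul_assoc, ← exp_add, neg_add_cancel, exp_zero, mul_one]

theorem setOf_mul_exp_neg_le_eq_Ici {L k ε : ℝ} (hk : 0 < k) (hε : 0 < ε) (hεL : ε ≤ L) :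
    {t : ℝ | 0 ≤ t ∧ L * exp (-k * t) ≤ ε} = Ici (log (L / ε) / k) := by
  have hL : 0 < L := hε.trans_le hεL
  ext t
  have hiff : L * exp (-k * t) ≤ ε ↔ log (L / ε) / k ≤ t := by
    rw [← le_div_iff₀' hL, ← log_le_log_iff (exp_pos _) (div_pos hε hL), log_exp,
      div_le_iff₀ hk, log_div hε.ne' hL.ne', log_div hL.ne' hε.ne']
    constructor <;> intro h <;> linarith
  have hnonneg : 0 ≤ log (L / ε) / k :=
    div_nonneg (log_nonneg ((one_le_div hε).2 hεL)) hk.le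
  simp only [mem_ofPred_eq, mem_Ici, hiff]
  exact ⟨And.right, fun h => ⟨hnonneg.trans h, h⟩⟩

namespace Matrix

variable {m n : Type*} [Fintype m] [Fintype n]

theorem hasDerivAt_iff_apply {M : ℝ → Matrix m n ℝ} {M' : Matrix m n ℝ} {t : ℝ} :
    HasDerivAt M M' t ↔ ∀ i j, HasDerivAt (fun s => M s i j) (M' i j) t := by
  classical
  refine ⟨fun h i j => ?_, fun h => ?_⟩
  · exact (entryLinearMap ℝ ℝ i j).toContinuousLinearMap.hasFDerivAt.comp_hasDerivAt t h
  · have hsum : HasDerivAt (fun s => ∑ i, ∑ j, single i j (M s i j))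
        (∑ i, ∑ j, single i j (M' i j)) t :=
      HasDerivAt.fun_sum fun i _ => HasDerivAt.fun_sum fun j _ =>
        (singleLinearMap ℝ i j : ℝ →ₗ[ℝ] Matrix m n ℝ).toContinuousLinearMap.hasFDerivAt
          |>.comp_hasDerivAt t (h i j)
    simpa only [← matrix_eq_sum_single] using hsum

theorem hasDerivAt_sum_sq_apply {M : ℝ → Matrix m n ℝ} {M' : Matrix m n ℝ} {t : ℝ}
    (h : HasDerivAt M M' t) :
    HasDerivAt (fun s => ∑ i, ∑ j, M s i j ^ 2) (2 * ∑ i, ∑ j, M t i j * M' i j) t := by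
  refine (HasDerivAt.fun_sum fun i _ => HasDerivAt.fun_sum fun j _ =>
    (hasDerivAt_iff_apply.1 h i j).fun_pow 2).congr_deriv ?_
  simp only [Finset.mul_sum]
  norm_num [mul_assoc]

variable [DecidableEq n]

section CommRing

variable {R : Type*} [CommRing R]

noncomputable def sqrtFlowField (C A : Matrix n n R) : Matrix n n R :=
  A⁻¹ * C + C * A⁻¹ - (2 : R) • A

theorem sqrtFlowField_mul_sub_mul_sqrtFlowField {C A : Matrix n n R} (hA : IsUnit A.det) :
    sqrtFlowField C A * C - C * sqrtFlowField C A =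
      -(A⁻¹ * ((A * C - C * A) * C + C * (A * C - C * A)) * A⁻¹) - (2 : R) • (A * C - C * A) := by
  have hconj : A⁻¹ * ((A * C - C * A) * C + C * (A * C - C * A)) * A⁻¹ =
      C * C * A⁻¹ - A⁻¹ * (C * C) := by
    simp only [mul_sub, sub_mul, mul_add, add_mul, mul_assoc,
      nonsing_inv_mul_cancel_left _ _ hA, mul_nonsing_inv _ hA, mul_one]
    noncomm_ring
  rw [hconj, sqrtFlowField, two_smul, two_smul]
  noncomm_ring

theorem sqrtFlowField_mul_add_mul_sqrtFlowField {C A : Matrix n n R} (hA : IsUnit A.det)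
    (hAC : A * C = C * A) :
    sqrtFlowField C A * A + A * sqrtFlowField C A = (4 : R) • (C - A * A) := by
  have hleft : A⁻¹ * C * A = C := by
    rw [mul_assoc, ← hAC, ← mul_assoc, nonsing_inv_mul _ hA, one_mul]
  have hright : A * (C * A⁻¹) = C := by
    rw [← mul_assoc, hAC, mul_nonsing_inv_cancel_right _ _ hA]
  rw [sqrtFlowField, sub_mul, add_mul, mul_sub, mul_add, hleft, hright,
    nonsing_inv_mul_cancel_right _ _ hA, mul_nonsing_inv_cancel_left _ _ hA,
    Matrix.smul_mul, Matrix.mul_smul]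
  module

end CommRing

theorem norm_sqrtFlowField_mul_sub_mul_sqrtFlowField_le {C A : Matrix n n ℝ}
    (hA : IsUnit A.det) :
    ‖sqrtFlowField C A * C - C * sqrtFlowField C A‖ ≤
      (2 * ‖A⁻¹‖ ^ 2 * ‖C‖ + 2) * ‖A * C - C * A‖ := by
  rw [sqrtFlowField_mul_sub_mul_sqrtFlowField hA]
  set D := A * C - C * A
  have hDC : ‖D * C + C * D‖ ≤ 2 * ‖C‖ * ‖D‖ := by
    linarith [norm_add_le (D * C) (C * D), norm_mul_le D C, norm_mul_le C D, mul_comm ‖D‖ ‖C‖]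
  have hconj : ‖A⁻¹ * (D * C + C * D) * A⁻¹‖ ≤ ‖A⁻¹‖ * (2 * ‖C‖ * ‖D‖) * ‖A⁻¹‖ :=
    norm_mul₃_le.trans (by gcongr)
  calc ‖-(A⁻¹ * (D * C + C * D) * A⁻¹) - (2 : ℝ) • D‖
      ≤ ‖A⁻¹ * (D * C + C * D) * A⁻¹‖ + ‖(2 : ℝ) • D‖ := by
        simpa only [norm_neg] using norm_sub_le (-(A⁻¹ * (D * C + C * D) * A⁻¹)) ((2 : ℝ) • D)
    _ ≤ ‖A⁻¹‖ * (2 * ‖C‖ * ‖D‖) * ‖A⁻¹‖ + 2 * ‖D‖ := by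
        rw [norm_smul, Real.norm_two]; gcongr
    _ = (2 * ‖A⁻¹‖ ^ 2 * ‖C‖ + 2) * ‖D‖ := by ring

theorem commute_of_hasDerivAt_sqrtFlowField {C : Matrix n n ℝ} {A : ℝ → Matrix n n ℝ}
    (hA : ∀ t, IsUnit (A t).det) (hflow : ∀ t, HasDerivAt A (sqrtFlowField C (A t)) t)
    (h0 : A 0 * C = C * A 0) {t : ℝ} (ht : 0 ≤ t) : A t * C = C * A t := by
  have hcont : Continuous A := continuous_iff_continuousAt.2 fun s => (hflow s).continuousAt
  have hinv : Continuous fun s => (A s)⁻¹ := continuous_iff_continuousAt.2 fun s =>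
    (continuousAt_matrix_inv _ (by
      rw [Ring.inverse_eq_inv']; exact continuousAt_inv₀ (hA s).ne_zero)).comp hcont.continuousAt
  have hcomm : ∀ s, HasDerivAt (fun s => A s * C - C * A s)
      (sqrtFlowField C (A s) * C - C * sqrtFlowField C (A s)) s :=
    fun s => ((hflow s).mul_const C).sub ((hflow s).const_mul C)
  rw [← sub_eq_zero]
  exact eq_zero_of_norm_deriv_le_mul_norm (by fun_prop) hcomm
    (fun s => norm_sqrtFlowField_mul_sub_mul_sqrtFlowField_le (hA s)) (sub_eq_zero.2 h0) ht

end Matrix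

theorem stmt_14_general {n : ℕ} (C : Matrix (Fin n) (Fin n) ℝ)
    (A : ℝ → Matrix (Fin n) (Fin n) ℝ) (hA : ∀ t : ℝ, (A t).PosDef)
    (hAode : ∀ t : ℝ, ∀ i j,
      HasDerivAt (fun s => A s i j)
        (((A t)⁻¹ * C + C * (A t)⁻¹ - (2 : ℝ) • A t) i j) t)
    (hcomm0 : A 0 * C = C * A 0) :
    let ℓ : Matrix (Fin n) (Fin n) ℝ → ℝ :=
      fun B => Real.sqrt (∑ i, ∑ j, ((C - B * B) i j) ^ 2)
    (∀ t : ℝ, 0 ≤ t → A t * C = C * A t) ∧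
    (∀ t : ℝ, 0 ≤ t →
      HasDerivAt (fun s => ∑ i, ∑ j, ((C - A s * A s) i j) ^ 2)
        (-8 * ∑ i, ∑ j, ((C - A t * A t) i j) ^ 2) t) ∧
    (∀ t : ℝ, 0 ≤ t → ℓ (A t) = ℓ (A 0) * Real.exp (-4 * t)) ∧
    (∀ ε : ℝ, 0 < ε → ε < ℓ (A 0) →
      sInf {t : ℝ | 0 ≤ t ∧ ℓ (A t) ≤ ε} = (1 / 4) * Real.log (ℓ (A 0) / ε)) := by
  intro ℓ
  have hunit (t : ℝ) : IsUnit (A t).det := (isUnit_iff_isUnit_det _).1 (hA t).isUnit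
  have hflow (t : ℝ) : HasDerivAt A (sqrtFlowField C (A t)) t := hasDerivAt_iff_apply.2 (hAode t)
  have hcomm (t : ℝ) (ht : 0 ≤ t) : A t * C = C * A t :=
    commute_of_hasDerivAt_sqrtFlowField hunit hflow hcomm0 ht
  have hresidual (t : ℝ) (ht : 0 ≤ t) :
      HasDerivAt (fun s => C - A s * A s) (-(4 : ℝ) • (C - A t * A t)) t := by
    refine (((hflow t).mul (hflow t)).const_sub C).congr_deriv ?_
    rw [sqrtFlowField_mul_add_mul_sqrtFlowField (hunit t) (hcomm t ht), neg_smul]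
  have hsq (t : ℝ) (ht : 0 ≤ t) : HasDerivAt (fun s => ∑ i, ∑ j, ((C - A s * A s) i j) ^ 2)
      (-8 * ∑ i, ∑ j, ((C - A t * A t) i j) ^ 2) t := by
    refine (hasDerivAt_sum_sq_apply (hresidual t ht)).congr_deriv ?_
    simp only [Matrix.smul_apply, smul_eq_mul, Finset.mul_sum]
    ring_nf
  have hdecay (t : ℝ) (ht : 0 ≤ t) : ℓ (A t) = ℓ (A 0) * exp (-4 * t) := by
    have hnonneg : 0 ≤ ∑ i, ∑ j, ((C - A 0 * A 0) i j) ^ 2 := by positivity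
    simp only [ℓ]
    rw [eq_mul_exp_of_hasDerivAt_mul hsq ht, sqrt_mul hnonneg, ← exp_half]
    ring_nf
  refine ⟨hcomm, hsq, hdecay, fun ε hε hεℓ => ?_⟩
  have hset : {t : ℝ | 0 ≤ t ∧ ℓ (A t) ≤ ε} = {t | 0 ≤ t ∧ ℓ (A 0) * exp (-4 * t) ≤ ε} :=
    Set.ext fun t => and_congr_right fun ht => by rw [hdecay t ht]
  rw [hset, setOf_mul_exp_neg_le_eq_Ici four_pos hε hεℓ.le, csInf_Ici]
  ring

/-- If additionally A(0) commutes with C, then A(t) commutes with C for all t ≥ 0,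
d/dt ℓ(A(t))² = −8ℓ(A(t))², hence ℓ(A(t)) = ℓ(A(0))·exp(−4t), and the first time at
which ℓ(A(t)) ≤ ε equals (1/4)·log(ℓ(A(0))/ε) for 0 < ε < ℓ(A(0)). -/
theorem stmt_14 {n : ℕ} (C : Matrix (Fin n) (Fin n) ℝ) (hC : C.PosDef)
    (A : ℝ → Matrix (Fin n) (Fin n) ℝ) (hA : ∀ t : ℝ, (A t).PosDef)
    (hAode : ∀ t : ℝ, ∀ i j,
      HasDerivAt (fun s => A s i j)
        (((A t)⁻¹ * C + C * (A t)⁻¹ - (2 : ℝ) • A t) i j) t)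
    (hcomm0 : A 0 * C = C * A 0) :
    let ℓ : Matrix (Fin n) (Fin n) ℝ → ℝ :=
      fun B => Real.sqrt (∑ i, ∑ j, ((C - B * B) i j) ^ 2)
    (∀ t : ℝ, 0 ≤ t → A t * C = C * A t) ∧
    (∀ t : ℝ, 0 ≤ t →
      HasDerivAt (fun s => ∑ i, ∑ j, ((C - A s * A s) i j) ^ 2)
        (-8 * ∑ i, ∑ j, ((C - A t * A t) i j) ^ 2) t) ∧
    (∀ t : ℝ, 0 ≤ t → ℓ (A t) = ℓ (A 0) * Real.exp (-4 * t)) ∧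
    (∀ ε : ℝ, 0 < ε → ε < ℓ (A 0) →
      sInf {t : ℝ | 0 ≤ t ∧ ℓ (A t) ≤ ε} = (1 / 4) * Real.log (ℓ (A 0) / ε)) :=
  stmt_14_general C A hA hAode hcomm0
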